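/- Let T > 0 and let f : ℝ → ℝ be càdlàg and of bounded variation on [0,T]. If Δf(s) > −1 for all s ∈ (0,T], then the right-jump-inversion of the left-jump-inversion of f equals f on [0,T], i.e. (f̄)~ = f pointwise on [0,T]. Similarly, if Δf(s) < 1 for all s ∈ (0,T], then the left-jump-inversion of the right-jump-inversion of f equals f on [0,T], i.e. (f̃)‾ = f pointwise on [0,T]. -/

import Mathlib

open Set Filter

/-- The jump of `f` at `s`: `f s` minus the left limit of `f` at `s`. -/
noncomputable def jumpAt (f : ℝ → ℝ) (s : ℝ) : ℝ := f s - Function.leftLim f s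

/-- `f` is càdlàg on `[0,T]`: right-continuous at each point of `[0,T]` and
possessing left limits at each point of `(0,T]`. -/
def CadlagOn (f : ℝ → ℝ) (T : ℝ) : Prop :=
  (∀ t ∈ Set.Icc (0 : ℝ) T, ContinuousWithinAt f (Set.Ici t) t) ∧
  (∀ s ∈ Set.Ioc (0 : ℝ) T,
    Filter.Tendsto f (nhdsWithin s (Set.Iio s)) (nhds (Function.leftLim f s)))

/-- The left-jump-inversion `f̄(t) = f(t) - ∑_{0<s≤t} (Δf s)² / (1 + Δf s)`. -/
noncomputable def leftJumpInversion (f : ℝ → ℝ) (t : ℝ) : ℝ :=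
  f t - ∑' s : Set.Ioc (0 : ℝ) t, (jumpAt f s) ^ 2 / (1 + jumpAt f s)

/-- The right-jump-inversion `f̃(t) = f(t) + ∑_{0<s≤t} (Δf s)² / (1 - Δf s)`. -/
noncomputable def rightJumpInversion (f : ℝ → ℝ) (t : ℝ) : ℝ :=
  f t + ∑' s : Set.Ioc (0 : ℝ) t, (jumpAt f s) ^ 2 / (1 - jumpAt f s)

open Function Topology Asymptotics

/-!
The jumps of a càdlàg function of bounded variation are absolutely summable: jumps at finitely
many points are bounded by the variations over disjoint intervals ending at those points. For an
absolutely summable family `a`, dominated convergence shows that `t ↦ ∑_{0<s≤t} a s` has left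
limit `∑_{0<s<t} a s` at `t`, so adding it to `f` adds `a s` to the jump of `f` at `s`. Hence the
jump `x` of `f` becomes `x / (1 + x)` in `f̄`, and the right inversion of `f̄` adds back
`(x / (1 + x))² / (1 - x / (1 + x)) = x² / (1 + x)`, which is exactly what `f̄` subtracted.
The other composition is symmetric.
-/

theorem edist_leftLim_le_eVariationOn {f : ℝ → ℝ} {u m : ℝ}
    (hf : Tendsto f (𝓝[<] m) (𝓝 (leftLim f m))) (hu : u < m) :
    edist (f m) (leftLim f m) ≤ eVariationOn f (Icc u m) := by
  refine le_of_tendsto (tendsto_const_nhds.edist hf) ?_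
  filter_upwards [Ioo_mem_nhdsLT hu] with v hv
  exact eVariationOn.edist_le f ⟨hu.le, le_rfl⟩ ⟨hv.1.le, hv.2.le⟩

theorem sum_edist_leftLim_le_eVariationOn {f : ℝ → ℝ} {F : Finset ℝ}
    (hf : ∀ s ∈ F, Tendsto f (𝓝[<] s) (𝓝 (leftLim f s))) {a b : ℝ} (hF : ↑F ⊆ Ioc a b) :
    ∑ s ∈ F, edist (f s) (leftLim f s) ≤ eVariationOn f (Icc a b) := by
  classical
  induction F using Finset.induction_on_max generalizing b with
  | empty => simp
  | insert m F hFm ih =>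
    have hm : m ∈ Ioc a b := hF (Finset.mem_insert_self m F)
    obtain ⟨c, hac, hcm, hFc⟩ : ∃ c, a ≤ c ∧ c < m ∧ ∀ x ∈ F, x ≤ c := by
      rcases F.eq_empty_or_nonempty with rfl | hne
      · exact ⟨a, le_rfl, hm.1, by simp⟩
      · exact ⟨max a (F.max' hne), le_max_left _ _, max_lt hm.1 (hFm _ (F.max'_mem hne)),
          fun x hx => le_max_of_le_right (F.le_max' x hx)⟩
    have hFac : ↑F ⊆ Ioc a c := fun x hx =>
      ⟨(hF (Finset.mem_insert_of_mem hx)).1, hFc x hx⟩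
    calc ∑ s ∈ insert m F, edist (f s) (leftLim f s)
        = edist (f m) (leftLim f m) + ∑ s ∈ F, edist (f s) (leftLim f s) :=
          Finset.sum_insert fun hmF => (hFm m hmF).false
      _ ≤ eVariationOn f (Icc c m) + eVariationOn f (Icc a c) :=
          add_le_add (edist_leftLim_le_eVariationOn (hf m (F.mem_insert_self m)) hcm)
            (ih (fun s hs => hf s (Finset.mem_insert_of_mem hs)) hFac)
      _ = eVariationOn f (Icc a m) := by
          simpa [add_comm] using eVariationOn.Icc_add_Icc f (s := univ) hac hcm.le (mem_univ c)
      _ ≤ eVariationOn f (Icc a b) := eVariationOn.mono f (Icc_subset_Icc_right hm.2)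

theorem summable_jumpAt {f : ℝ → ℝ} {a b : ℝ}
    (hf : ∀ s ∈ Ioc a b, Tendsto f (𝓝[<] s) (𝓝 (leftLim f s)))
    (hBV : BoundedVariationOn f (Icc a b)) :
    Summable fun s : Ioc a b => jumpAt f s := by
  refine .of_abs (summable_of_sum_le (c := (eVariationOn f (Icc a b)).toReal)
    (fun _ => abs_nonneg _) fun u => ?_)
  rw [← ENNReal.ofReal_le_iff_le_toReal hBV, ENNReal.ofReal_sum_of_nonneg fun _ _ => abs_nonneg _]
  have hu : ↑(u.map (Embedding.subtype (· ∈ Ioc a b))) ⊆ Ioc a b := by simp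
  simpa [edist_dist, Real.dist_eq, jumpAt] using
    sum_edist_leftLim_le_eVariationOn (fun s hs => hf s (hu hs)) hu

theorem Summable.sq_div_one_add {ι : Type*} {x : ι → ℝ} (hx : Summable x) :
    Summable fun i => x i ^ 2 / (1 + x i) := by
  have h0 : Tendsto x cofinite (𝓝 0) := hx.tendsto_cofinite_zero
  have hdiv : Tendsto (fun i => x i / (1 + x i)) cofinite (𝓝 0) := by
    have hcont : ContinuousAt (fun y : ℝ => y / (1 + y)) 0 := by fun_prop (disch := norm_num)
    simpa [Function.comp_def] using hcont.tendsto.comp h0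
  refine summable_of_isBigO hx ?_
  simpa [sq, mul_div_assoc] using (isBigO_refl x cofinite).mul (hdiv.isBigO_one ℝ)

theorem tendsto_tsum_Ioc_nhdsLT {a : ℝ → ℝ} {c T m : ℝ} (ha : Summable fun s : Ioc c T => a s)
    (hm : m ≤ T) :
    Tendsto (fun t => ∑' s : Ioc c t, a s) (𝓝[<] m) (𝓝 (∑' s : Ioo c m, a s)) := by
  simp only [tsum_subtype]
  refine tendsto_tsum_of_dominated_convergence (bound := (Ioc c T).indicator fun s => |a s|)
    (summable_subtype_iff_indicator.1 ha.abs) (fun k => ?_) ?_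
  · rcases lt_or_ge k m with hk | hk
    · refine tendsto_const_nhds.congr' ?_
      filter_upwards [Ioo_mem_nhdsLT hk] with t ht
      simp [indicator_apply, hk, ht.1.le]
    · refine tendsto_const_nhds.congr' ?_
      filter_upwards [self_mem_nhdsWithin] with t (ht : t < m)
      simp [hk.not_gt, (ht.trans_le hk).not_ge]
  · filter_upwards [self_mem_nhdsWithin] with t (ht : t < m) k
    by_cases hk : k ∈ Ioc c t
    · simp [indicator_of_mem hk, indicator_of_mem (Ioc_subset_Ioc_right (ht.le.trans hm) hk)]
    · simp [indicator_of_notMem hk, indicator_nonneg]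

theorem tsum_Ioc_eq_add_tsum_Ioo {a : ℝ → ℝ} {c T m : ℝ} (ha : Summable fun s : Ioc c T => a s)
    (hm : m ∈ Ioc c T) :
    ∑' s : Ioc c m, a s = a m + ∑' s : Ioo c m, a s := by
  have hIoo : Summable fun s : Ioo c m => a s :=
    ha.comp_injective (inclusion_injective (Ioo_subset_Ioc_self.trans (Ioc_subset_Ioc_right hm.2)))
  rw [← Ioo_union_right hm.1, Summable.tsum_union_disjoint (by simp) hIoo (Summable.of_finite),
    tsum_singleton, add_comm]

theorem jumpAt_add_tsum_Ioc {f a : ℝ → ℝ} {c T m : ℝ} (hf : Tendsto f (𝓝[<] m) (𝓝 (leftLim f m)))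
    (ha : Summable fun s : Ioc c T => a s) (hm : m ∈ Ioc c T) :
    jumpAt (fun t => f t + ∑' s : Ioc c t, a s) m = jumpAt f m + a m := by
  rw [jumpAt, jumpAt, leftLim_eq_of_tendsto (hf.add (tendsto_tsum_Ioc_nhdsLT ha hm.2)),
    tsum_Ioc_eq_add_tsum_Ioo ha hm]
  ring

theorem jumpAt_sub_tsum_Ioc {f a : ℝ → ℝ} {c T m : ℝ} (hf : Tendsto f (𝓝[<] m) (𝓝 (leftLim f m)))
    (ha : Summable fun s : Ioc c T => a s) (hm : m ∈ Ioc c T) :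
    jumpAt (fun t => f t - ∑' s : Ioc c t, a s) m = jumpAt f m - a m := by
  rw [jumpAt, jumpAt, leftLim_eq_of_tendsto (hf.sub (tendsto_tsum_Ioc_nhdsLT ha hm.2)),
    tsum_Ioc_eq_add_tsum_Ioo ha hm]
  ring

theorem jumpAt_leftJumpInversion {f : ℝ → ℝ} {T s : ℝ}
    (hf : Tendsto f (𝓝[<] s) (𝓝 (leftLim f s))) (hJ : Summable fun s : Ioc (0 : ℝ) T => jumpAt f s)
    (hs : s ∈ Ioc 0 T) (hs₁ : 1 + jumpAt f s ≠ 0) :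
    jumpAt (leftJumpInversion f) s = jumpAt f s / (1 + jumpAt f s) := by
  refine (jumpAt_sub_tsum_Ioc (a := fun x => jumpAt f x ^ 2 / (1 + jumpAt f x)) hf
    hJ.sq_div_one_add hs).trans ?_
  field_simp
  ring

theorem jumpAt_rightJumpInversion {f : ℝ → ℝ} {T s : ℝ}
    (hf : Tendsto f (𝓝[<] s) (𝓝 (leftLim f s))) (hJ : Summable fun s : Ioc (0 : ℝ) T => jumpAt f s)
    (hs : s ∈ Ioc 0 T) (hs₁ : 1 - jumpAt f s ≠ 0) :
    jumpAt (rightJumpInversion f) s = jumpAt f s / (1 - jumpAt f s) := by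
  have hb : Summable fun s : Ioc (0 : ℝ) T => jumpAt f s ^ 2 / (1 - jumpAt f s) := by
    simpa [sub_eq_add_neg] using hJ.neg.sq_div_one_add
  refine (jumpAt_add_tsum_Ioc (a := fun x => jumpAt f x ^ 2 / (1 - jumpAt f x)) hf hb hs).trans ?_
  field_simp
  ring

theorem rightJumpInversion_leftJumpInversion {f : ℝ → ℝ} {T t : ℝ}
    (hf : ∀ s ∈ Ioc (0 : ℝ) T, Tendsto f (𝓝[<] s) (𝓝 (leftLim f s)))
    (hJ : Summable fun s : Ioc (0 : ℝ) T => jumpAt f s)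
    (hJ₁ : ∀ s ∈ Ioc (0 : ℝ) T, -1 < jumpAt f s) (ht : t ≤ T) :
    rightJumpInversion (leftJumpInversion f) t = f t := by
  have hterm (s : Ioc 0 t) :
      jumpAt (leftJumpInversion f) s ^ 2 / (1 - jumpAt (leftJumpInversion f) s) =
        jumpAt f s ^ 2 / (1 + jumpAt f s) := by
    have hs : (s : ℝ) ∈ Ioc 0 T := Ioc_subset_Ioc_right ht s.2
    have hs₁ : 1 + jumpAt f s ≠ 0 := by linarith [hJ₁ s hs]
    rw [jumpAt_leftJumpInversion (hf s hs) hJ hs hs₁]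
    field_simp
    ring
  rw [rightJumpInversion, tsum_congr hterm, leftJumpInversion, sub_add_cancel]

theorem leftJumpInversion_rightJumpInversion {f : ℝ → ℝ} {T t : ℝ}
    (hf : ∀ s ∈ Ioc (0 : ℝ) T, Tendsto f (𝓝[<] s) (𝓝 (leftLim f s)))
    (hJ : Summable fun s : Ioc (0 : ℝ) T => jumpAt f s)
    (hJ₁ : ∀ s ∈ Ioc (0 : ℝ) T, jumpAt f s < 1) (ht : t ≤ T) :
    leftJumpInversion (rightJumpInversion f) t = f t := by
  have hterm (s : Ioc 0 t) :
      jumpAt (rightJumpInversion f) s ^ 2 / (1 + jumpAt (rightJumpInversion f) s) =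
        jumpAt f s ^ 2 / (1 - jumpAt f s) := by
    have hs : (s : ℝ) ∈ Ioc 0 T := Ioc_subset_Ioc_right ht s.2
    have hs₁ : 1 - jumpAt f s ≠ 0 := by linarith [hJ₁ s hs]
    rw [jumpAt_rightJumpInversion (hf s hs) hJ hs hs₁]
    field_simp
    ring
  rw [leftJumpInversion, tsum_congr hterm, rightJumpInversion, add_sub_cancel_right]

theorem jumpInversion_involutive_general
    (T : ℝ) (f : ℝ → ℝ)
    (hc : CadlagOn f T) (hBV : BoundedVariationOn f (Set.Icc (0 : ℝ) T)) :
    ((∀ s ∈ Set.Ioc (0 : ℝ) T, -1 < jumpAt f s) →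
      ∀ t ∈ Set.Icc (0 : ℝ) T, rightJumpInversion (leftJumpInversion f) t = f t) ∧
    ((∀ s ∈ Set.Ioc (0 : ℝ) T, jumpAt f s < 1) →
      ∀ t ∈ Set.Icc (0 : ℝ) T, leftJumpInversion (rightJumpInversion f) t = f t) := by
  have hJ := summable_jumpAt hc.2 hBV
  exact ⟨fun hJ₁ t ht => rightJumpInversion_leftJumpInversion hc.2 hJ hJ₁ ht.2,
    fun hJ₁ t ht => leftJumpInversion_rightJumpInversion hc.2 hJ hJ₁ ht.2⟩

/-- For `f` càdlàg of bounded variation on `[0,T]`: if all jumps of `f`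
on `(0,T]` are `> -1`, then the right-jump-inversion of the left-jump-inversion of `f`
equals `f` on `[0,T]`; and if all jumps are `< 1`, then the left-jump-inversion of the
right-jump-inversion of `f` equals `f` on `[0,T]`. -/
theorem jumpInversion_involutive
    (T : ℝ) (hT : 0 < T) (f : ℝ → ℝ)
    (hc : CadlagOn f T) (hBV : BoundedVariationOn f (Set.Icc (0 : ℝ) T)) :
    ((∀ s ∈ Set.Ioc (0 : ℝ) T, -1 < jumpAt f s) →
      ∀ t ∈ Set.Icc (0 : ℝ) T, rightJumpInversion (leftJumpInversion f) t = f t) ∧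
    ((∀ s ∈ Set.Ioc (0 : ℝ) T, jumpAt f s < 1) →
      ∀ t ∈ Set.Icc (0 : ℝ) T, leftJumpInversion (rightJumpInversion f) t = f t) :=
  jumpInversion_involutive_general T f hc hBV
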